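/- Any minimizer W* of −φ^tot(W) among connected configurations contains at most K−3 non-zero weights in layers 2 through K−2 (i.e., between layers V_2 and V_{K-1}), when K > 3. -/

import Mathlib

open Finset

/-- Contiguity of an edge sequence: consecutive edges share endpoints. -/
def Contig (K : ℕ) (γ : Fin (K-1) → ℕ × ℕ) : Prop :=
  ∀ k : Fin (K-1), ∀ h : k.val + 1 < K - 1, (γ k).2 = (γ ⟨k.val + 1, h⟩).1

instance (K : ℕ) (γ : Fin (K-1) → ℕ × ℕ) : Decidable (Contig K γ) := by
  unfold Contig; infer_instance

/-- Total connectivity: sum over all contiguous input-to-output edge sequences of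
the product of edge weights. -/
noncomputable def phiTot (K : ℕ) (E : ℕ → Finset (ℕ × ℕ)) (θ : ℕ → ℕ → ℕ → ℝ) : ℝ :=
  ∑ γ ∈ (Fintype.piFinset (fun k : Fin (K-1) => E k.val)).filter (fun γ => Contig K γ),
    ∏ k : Fin (K-1), θ k.val (γ k).1 (γ k).2

/-- Total absolute weight of layer k. -/
noncomputable def Snorm (E : ℕ → Finset (ℕ × ℕ)) (W : ℕ → ℕ → ℕ → ℝ) (k : ℕ) : ℝ :=
  ∑ e ∈ E k, |W k e.1 e.2|

/-- Per-layer normalized weights. -/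
noncomputable def thetaNorm (E : ℕ → Finset (ℕ × ℕ)) (W : ℕ → ℕ → ℕ → ℝ)
    (k i j : ℕ) : ℝ :=
  |W k i j| / Snorm E W k

/-- Connectivity from the input layer to node `r` in layer `l`. -/
noncomputable def aIn (E : ℕ → Finset (ℕ × ℕ)) (θ : ℕ → ℕ → ℕ → ℝ) (l r : ℕ) : ℝ :=
  ∑ γ ∈ (Fintype.piFinset (fun k : Fin l => E k.val)).filter
      (fun γ => (∀ k : Fin l, ∀ h : k.val + 1 < l, (γ k).2 = (γ ⟨k.val + 1, h⟩).1)
        ∧ ∀ h : 0 < l, (γ ⟨l - 1, by omega⟩).2 = r),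
    ∏ k : Fin l, θ k.val (γ k).1 (γ k).2

/-- Connectivity from node `r` in layer `l` to the output layer (layer K-1). -/
noncomputable def aOut (K : ℕ) (E : ℕ → Finset (ℕ × ℕ)) (θ : ℕ → ℕ → ℕ → ℝ)
    (l r : ℕ) : ℝ :=
  ∑ γ ∈ (Fintype.piFinset (fun k : Fin (K - 1 - l) => E (l + k.val))).filter
      (fun γ => (∀ k : Fin (K - 1 - l), ∀ h : k.val + 1 < K - 1 - l,
          (γ k).2 = (γ ⟨k.val + 1, h⟩).1)
        ∧ ∀ h : 0 < K - 1 - l, (γ ⟨0, h⟩).1 = r),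
    ∏ k : Fin (K - 1 - l), θ (l + k.val) (γ k).1 (γ k).2

/-!
Since every layer of `θ` sums to one, the sum of `∏ k, θ k (γ k)` over *all* edge sequences
`γ` is `∏ k (∑ e ∈ E k, θ k e) = 1`. Hence `φ^tot = 1` forces every non-contiguous sequence to
have weight zero, so any sequence of positive edges is contiguous. Choosing positive edges in
all other layers, a positive edge of layer `k` must start where every positive edge of layer
`k - 1` ends and end where every positive edge of layer `k + 1` starts; in a middle layer this
pins down the edge, so each of the `K - 3` middle layers carries at most one non-zero weight.
-/

theorem sum_piFinset_prod_eq_one {ι α : Type*} [Fintype ι] [DecidableEq ι]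
    (t : ι → Finset α) (f : ι → α → ℝ) (h : ∀ i, ∑ a ∈ t i, f i a = 1) :
    ∑ γ ∈ Fintype.piFinset t, ∏ i, f i (γ i) = 1 := by
  rw [← prod_univ_sum]
  exact prod_eq_one fun i _ => h i

theorem thetaNorm_nonneg (E : ℕ → Finset (ℕ × ℕ)) (W : ℕ → ℕ → ℕ → ℝ) (k i j : ℕ) :
    0 ≤ thetaNorm E W k i j :=
  div_nonneg (abs_nonneg _) (sum_nonneg fun _ _ => abs_nonneg _)

theorem sum_thetaNorm_eq_one {E : ℕ → Finset (ℕ × ℕ)} {W : ℕ → ℕ → ℕ → ℝ} {k : ℕ}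
    (hS : Snorm E W k ≠ 0) : ∑ e ∈ E k, thetaNorm E W k e.1 e.2 = 1 := by
  simp only [thetaNorm, ← sum_div]
  exact div_self hS

theorem thetaNorm_pos_iff {E : ℕ → Finset (ℕ × ℕ)} {W : ℕ → ℕ → ℕ → ℝ} {k : ℕ}
    (hS : 0 < Snorm E W k) (i j : ℕ) : 0 < thetaNorm E W k i j ↔ W k i j ≠ 0 := by
  rw [thetaNorm, div_pos_iff_of_pos_right hS, abs_pos]

section PhiTotEqOne

variable {K : ℕ} {E : ℕ → Finset (ℕ × ℕ)} {θ : ℕ → ℕ → ℕ → ℝ}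

theorem contig_of_phiTot_eq_one (hθ : ∀ k i j, 0 ≤ θ k i j)
    (hsum : ∀ k < K - 1, ∑ e ∈ E k, θ k e.1 e.2 = 1) (hφ : phiTot K E θ = 1)
    {γ : Fin (K - 1) → ℕ × ℕ}
    (hγ : γ ∈ Fintype.piFinset fun k : Fin (K - 1) => E k)
    (hpos : ∀ k : Fin (K - 1), 0 < θ k (γ k).1 (γ k).2) : Contig K γ := by
  by_contra hnc
  set P := Fintype.piFinset fun k : Fin (K - 1) => E k
  have htotal : ∑ γ ∈ P, ∏ k : Fin (K - 1), θ k (γ k).1 (γ k).2 = 1 :=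
    sum_piFinset_prod_eq_one _ (fun (k : Fin (K - 1)) (e : ℕ × ℕ) => θ k e.1 e.2)
      fun k => hsum k k.isLt
  have hrest : ∑ γ ∈ P.filter (¬ Contig K ·), ∏ k : Fin (K - 1), θ k (γ k).1 (γ k).2 = 0 := by
    have := sum_filter_add_sum_filter_not P (Contig K ·)
      fun γ => ∏ k : Fin (K - 1), θ k (γ k).1 (γ k).2
    rw [← phiTot, hφ, htotal] at this
    linarith
  have hzero := (sum_eq_zero_iff_of_nonneg fun γ _ => prod_nonneg fun k _ => hθ _ _ _).mp
    hrest γ (mem_filter.mpr ⟨hγ, hnc⟩)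
  exact (prod_pos fun k _ => hpos k).ne' hzero

theorem exists_pos_edge_of_sum_eq_one (hθ : ∀ k i j, 0 ≤ θ k i j)
    (hsum : ∀ k < K - 1, ∑ e ∈ E k, θ k e.1 e.2 = 1) {k : ℕ} (hk : k < K - 1) :
    ∃ e ∈ E k, 0 < θ k e.1 e.2 := by
  by_contra! hcon
  have : ∑ e ∈ E k, θ k e.1 e.2 = 0 :=
    sum_eq_zero fun e he => (hcon e he).antisymm (hθ _ _ _)
  rw [hsum k hk] at this
  exact one_ne_zero this

theorem snd_eq_fst_of_phiTot_eq_one (hθ : ∀ k i j, 0 ≤ θ k i j)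
    (hsum : ∀ k < K - 1, ∑ e ∈ E k, θ k e.1 e.2 = 1) (hφ : phiTot K E θ = 1)
    {k : ℕ} (hk : k + 1 < K - 1)
    {e f : ℕ × ℕ} (he : e ∈ E k) (hepos : 0 < θ k e.1 e.2)
    (hf : f ∈ E (k + 1)) (hfpos : 0 < θ (k + 1) f.1 f.2) : e.2 = f.1 := by
  choose c hcmem hcpos using fun j : Fin (K - 1) =>
    exists_pos_edge_of_sum_eq_one hθ hsum j.isLt
  let γ : Fin (K - 1) → ℕ × ℕ := fun j =>
    if j.val = k then e else if j.val = k + 1 then f else c j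
  have hγ : ∀ j : Fin (K - 1), γ j ∈ E j ∧ 0 < θ j (γ j).1 (γ j).2 := by
    intro j
    simp only [γ]
    split_ifs with h₁ h₂
    · rw [h₁]; exact ⟨he, hepos⟩
    · rw [h₂]; exact ⟨hf, hfpos⟩
    · exact ⟨hcmem j, hcpos j⟩
  have hcontig := contig_of_phiTot_eq_one hθ hsum hφ
    (Fintype.mem_piFinset.mpr fun j => (hγ j).1) fun j => (hγ j).2
  simpa [γ] using hcontig ⟨k, by omega⟩ hk

theorem card_filter_pos_le_one (hθ : ∀ k i j, 0 ≤ θ k i j)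
    (hsum : ∀ k < K - 1, ∑ e ∈ E k, θ k e.1 e.2 = 1) (hφ : phiTot K E θ = 1)
    {k : ℕ} (hk₁ : 1 ≤ k) (hk₂ : k + 1 < K - 1) :
    #{e ∈ E k | 0 < θ k e.1 e.2} ≤ 1 := by
  obtain ⟨a, ha, hapos⟩ := exists_pos_edge_of_sum_eq_one hθ hsum (k := k - 1) (by omega)
  obtain ⟨b, hb, hbpos⟩ := exists_pos_edge_of_sum_eq_one hθ hsum hk₂
  have hsucc : k - 1 + 1 = k := by omega
  refine card_le_one.mpr fun e he e' he' => ?_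
  rw [mem_filter] at he he'
  have hsrc : ∀ x ∈ E k, 0 < θ k x.1 x.2 → x.1 = a.2 := fun x hx hxpos =>
    (snd_eq_fst_of_phiTot_eq_one hθ hsum hφ (by omega) ha hapos
      (hsucc ▸ hx) (hsucc ▸ hxpos)).symm
  have htgt : ∀ x ∈ E k, 0 < θ k x.1 x.2 → x.2 = b.1 := fun x hx hxpos =>
    snd_eq_fst_of_phiTot_eq_one hθ hsum hφ hk₂ hx hxpos hb hbpos
  exact Prod.ext ((hsrc e he.1 he.2).trans (hsrc e' he'.1 he'.2).symm)
    ((htgt e he.1 he.2).trans (htgt e' he'.1 he'.2).symm)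

end PhiTotEqOne

theorem minimizer_middle_sparsity_general
    (K : ℕ) (E : ℕ → Finset (ℕ × ℕ))
    (W : ℕ → ℕ → ℕ → ℝ)
    (hS : ∀ k, k < K - 1 → 0 < Snorm E W k)
    (hmax : phiTot K E (thetaNorm E W) = 1) :
    ∑ k ∈ Finset.Ico 1 (K - 2), ((E k).filter (fun e => W k e.1 e.2 ≠ 0)).card
      ≤ K - 3 := by
  have hlayer : ∀ k ∈ Ico 1 (K - 2), #{e ∈ E k | W k e.1 e.2 ≠ 0} ≤ 1 := by
    intro k hk
    rw [mem_Ico] at hk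
    have hpos := thetaNorm_pos_iff (hS k (by omega))
    simp only [← hpos]
    exact card_filter_pos_le_one (thetaNorm_nonneg E W)
      (fun k hk => sum_thetaNorm_eq_one (hS k hk).ne') hmax hk.1 (by omega)
  calc ∑ k ∈ Ico 1 (K - 2), #{e ∈ E k | W k e.1 e.2 ≠ 0}
      ≤ ∑ _k ∈ Ico 1 (K - 2), 1 := sum_le_sum hlayer
    _ = K - 3 := by simp only [sum_const, smul_eq_mul, mul_one, Nat.card_Ico]; omega

/-- any connected minimizer of −φ^tot (i.e. φ^tot = 1) has at most
K − 3 non-zero weights between layers 2 and K−1 (K > 3, fully connected). -/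
theorem minimizer_middle_sparsity
    (K : ℕ) (hK : 3 < K) (n : ℕ → ℕ) (E : ℕ → Finset (ℕ × ℕ))
    (W : ℕ → ℕ → ℕ → ℝ)
    (hE : ∀ k, k < K - 1 → E k = (Finset.range (n k)) ×ˢ (Finset.range (n (k+1))))
    (hS : ∀ k, k < K - 1 → 0 < Snorm E W k)
    (hmax : phiTot K E (thetaNorm E W) = 1) :
    ∑ k ∈ Finset.Ico 1 (K - 2), ((E k).filter (fun e => W k e.1 e.2 ≠ 0)).card
      ≤ K - 3 :=
  minimizer_middle_sparsity_general K E W hS hmax
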